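/- arXiv:2001.03035 — 2 statements merged into one kernel-verified Lean document; each statement's English description precedes it below -/
import Mathlib

section
/- Packing lemma (cross-typicality bound): Let p ∈ 𝒫(𝒳), W, W̄ : 𝒳 → 𝒫(𝒴) channels, and x̄^n ∈ 𝒯ⁿ_{p̄,δ}. Then (pW)ⁿ(𝒯ⁿ_{W̄,δ}(x̄^n)) ≤ (n+1)^{|𝒳||𝒴|}·exp₂{ −n (I(p̄; W̄) − f₃(δ)) } for some f₃(δ) > 0 with f₃(δ) → 0 as δ → 0. -/
open Finset
open scoped Classical

/-- Number of occurrences of the letter `a` in the sequence `x`. -/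
def cnt {𝒳 : Type*} [DecidableEq 𝒳] {n : ℕ} (a : 𝒳) (x : Fin n → 𝒳) : ℕ :=
  (Finset.univ.filter fun i => x i = a).card

/-- Number of joint occurrences of the pair `(a, b)` in the pair of sequences `(x, y)`. -/
def cnt2 {𝒳 𝒴 : Type*} [DecidableEq 𝒳] [DecidableEq 𝒴] {n : ℕ}
    (a : 𝒳) (b : 𝒴) (x : Fin n → 𝒳) (y : Fin n → 𝒴) : ℕ :=
  (Finset.univ.filter fun i => x i = a ∧ y i = b).card

/-- The set `𝒯ⁿ_{p,δ}` of `δ`-typical sequences for a distribution `p`. -/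
noncomputable def typSet {𝒳 : Type*} [Fintype 𝒳] [DecidableEq 𝒳] (n : ℕ)
    (p : 𝒳 → ℝ) (δ : ℝ) : Finset (Fin n → 𝒳) :=
  Finset.univ.filter fun x =>
    ∀ a, |(cnt a x : ℝ) / n - p a| < δ ∧ (p a = 0 → cnt a x = 0)

/-- The set `𝒯ⁿ_{W,δ}(x)` of conditionally `δ`-typical output sequences given input `x`. -/
noncomputable def condTypSet {𝒳 𝒴 : Type*} [Fintype 𝒳] [DecidableEq 𝒳]
    [Fintype 𝒴] [DecidableEq 𝒴] (n : ℕ)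
    (W : 𝒳 → 𝒴 → ℝ) (δ : ℝ) (x : Fin n → 𝒳) : Finset (Fin n → 𝒴) :=
  Finset.univ.filter fun y => ∀ a b,
    |(cnt2 a b x y : ℝ) / n - W a b * ((cnt a x : ℝ) / n)| < δ ∧
      (W a b = 0 → cnt2 a b x y = 0)

/-- Shannon entropy (in bits). -/
noncomputable def shannonEntropy {𝒴 : Type*} [Fintype 𝒴] (q : 𝒴 → ℝ) : ℝ :=
  -∑ y, q y * Real.logb 2 (q y)

/-- Conditional entropy `H(W|p)` (in bits). -/
noncomputable def condEntropyChan {𝒳 𝒴 : Type*} [Fintype 𝒳] [Fintype 𝒴]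
    (W : 𝒳 → 𝒴 → ℝ) (p : 𝒳 → ℝ) : ℝ :=
  -∑ x, ∑ y, p x * W x y * Real.logb 2 (W x y)

/-- Output distribution `pW` of the channel `W` under input distribution `p`. -/
def outDist {𝒳 𝒴 : Type*} [Fintype 𝒳] (p : 𝒳 → ℝ) (W : 𝒳 → 𝒴 → ℝ) : 𝒴 → ℝ :=
  fun y => ∑ x, p x * W x y

/-- Mutual information `I(p;W) = H(pW) − H(W|p)` (in bits). -/
noncomputable def mutInfo {𝒳 𝒴 : Type*} [Fintype 𝒳] [Fintype 𝒴]
    (p : 𝒳 → ℝ) (W : 𝒳 → 𝒴 → ℝ) : ℝ :=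
  shannonEntropy (outDist p W) - condEntropyChan W p

/-! Split `𝒯ⁿ_{W̄,δ}(x̄)` according to the joint type `P` of `(x̄, y)`; there are at most
`(n+1)^{|𝒳||𝒴|}` joint types. All `y` in one class have the same type `P_Y`, hence
`(pW)ⁿ`-probability at most `exp (-n H(P_Y))` by Gibbs' inequality. The class itself has at
most `exp (n (H(P) - H(P_X)))` elements, since each of them has probability
`exp (-n (H(P) - H(P_X)))` when the conditional type `P_{Y|X}` is used as a channel with input
`x̄`. So a class contributes at most `exp (-n I(P))`. Typicality puts `P` within `2δ` of
`p̄ × W̄`, and the modulus of continuity `|η t - η s| ≤ 2 √|t - s|` of `η t = -t log t` on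
`[0, 1]` turns this into `I(P) ≥ I(p̄; W̄) - f₃(δ)` (entropies in nats). -/

open Real

lemma mul_log_le_mul_log {a b : ℝ} (ha : 0 ≤ a) (hab : a ≤ b) : a * log a ≤ a * log b := by
  rcases ha.eq_or_lt with rfl | ha
  · simp
  · exact mul_le_mul_of_nonneg_left (log_le_log ha hab) ha.le

lemma negMulLog_add_le {s d : ℝ} (hs : 0 ≤ s) (hd : 0 ≤ d) :
    negMulLog (s + d) ≤ negMulLog s + negMulLog d := by
  have h₁ := mul_log_le_mul_log hs (le_add_of_nonneg_right hd)
  have h₂ := mul_log_le_mul_log hd (le_add_of_nonneg_left hs)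
  simp only [negMulLog]
  linarith

lemma negMulLog_le_two_mul_sqrt {d : ℝ} (hd : 0 ≤ d) : negMulLog d ≤ 2 * √d := by
  have h := self_sub_one_le_mul_log (sqrt_nonneg d)
  have hlog : log d = 2 * log √d := by rw [log_sqrt hd]; ring
  have hsq : d = √d * √d := (mul_self_sqrt hd).symm
  have := mul_le_mul_of_nonneg_left h (sqrt_nonneg d)
  rw [negMulLog, hlog]
  nth_rewrite 1 [hsq]
  nlinarith [sqrt_nonneg d]

lemma negMulLog_sub_negMulLog_le {s t : ℝ} (hs : 0 ≤ s) (hst : s ≤ t) (ht : t ≤ 1) :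
    negMulLog s - negMulLog t ≤ t - s := by
  rcases hs.eq_or_lt with rfl | hs
  · linarith [negMulLog_nonneg hst ht, negMulLog_zero]
  have ht₀ : 0 < t := hs.trans_le hst
  have hlog : log (t / s) ≤ t / s - 1 := log_le_sub_one_of_pos (div_pos ht₀ hs)
  rw [log_div ht₀.ne' hs.ne'] at hlog
  have hgibbs : s * log t - s * log s ≤ t - s := by
    have := mul_le_mul_of_nonneg_left hlog hs.le
    rwa [mul_sub, mul_sub, mul_div_cancel₀ _ hs.ne', mul_one] at this
  have hlogt : (t - s) * log t ≤ 0 :=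
    mul_nonpos_of_nonneg_of_nonpos (sub_nonneg.2 hst) (log_nonpos ht₀.le ht)
  simp only [negMulLog]
  nlinarith

lemma abs_negMulLog_sub_le {s t : ℝ} (hs : s ∈ Set.Icc (0 : ℝ) 1) (ht : t ∈ Set.Icc (0 : ℝ) 1) :
    |negMulLog t - negMulLog s| ≤ 2 * √|t - s| := by
  wlog hst : s ≤ t generalizing s t
  · rw [abs_sub_comm, abs_sub_comm t]
    exact this ht hs (le_of_not_ge hst)
  have hd : 0 ≤ t - s := sub_nonneg.2 hst
  have hd₁ : t - s ≤ √(t - s) := by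
    rw [le_sqrt hd hd]
    nlinarith [hs.1, ht.2]
  have hupper : negMulLog t ≤ negMulLog s + negMulLog (t - s) := by
    simpa using negMulLog_add_le hs.1 hd
  rw [abs_of_nonneg hd, abs_le]
  constructor
  · linarith [negMulLog_sub_negMulLog_le hs.1 hst ht.2, sqrt_nonneg (t - s)]
  · linarith [negMulLog_le_two_mul_sqrt hd]

lemma div_pow_self_eq_exp (k : ℕ) {t : ℝ} (ht : 0 < t) :
    ((k : ℝ) / t) ^ k = exp (-(t * negMulLog (k / t))) := by
  rcases k.eq_zero_or_pos with rfl | hk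
  · simp
  rw [← exp_log (pow_pos (by positivity) k : 0 < ((k : ℝ) / t) ^ k), log_pow, negMulLog]
  congr 1
  field_simp

lemma pow_le_div_pow_mul_exp {q t : ℝ} (hq : 0 ≤ q) (ht : 0 < t) (k : ℕ) :
    q ^ k ≤ ((k : ℝ) / t) ^ k * exp (t * q - k) := by
  rcases k.eq_zero_or_pos with rfl | hk
  · simpa using one_le_exp (mul_nonneg ht.le hq)
  have hc : 0 < (k : ℝ) / t := by positivity
  calc q ^ k = (k / t) ^ k * (q / (k / t)) ^ k := by rw [← mul_pow, mul_div_cancel₀ _ hc.ne']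
    _ ≤ (k / t) ^ k * exp (q / (k / t) - 1) ^ k := by
        gcongr
        linarith [add_one_le_exp (q / (k / t) - 1)]
    _ = (k / t) ^ k * exp (t * q - k) := by
        rw [← exp_nat_mul]
        congr 2
        field_simp

lemma abs_sum_sub_sum_le {ι : Type*} [Fintype ι] {f g : ι → ℝ} {ε : ℝ}
    (h : ∀ i, |f i - g i| ≤ ε) : |∑ i, f i - ∑ i, g i| ≤ Fintype.card ι * ε := by
  rw [← sum_sub_distrib]
  refine (abs_sum_le_sum_abs _ _).trans ?_
  simpa using sum_le_sum fun i (_ : i ∈ univ) => h i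

lemma sum_le_card_nsmul_of_sum_fiber_le {ι κ M : Type*} [Fintype κ] [DecidableEq κ]
    [AddCommMonoid M] [PartialOrder M] [IsOrderedAddMonoid M] {s : Finset ι} {f : ι → κ}
    {g : ι → M} {B : M} (hB : 0 ≤ B) (h : ∀ i ∈ s, ∑ j ∈ s with f j = f i, g j ≤ B) :
    ∑ i ∈ s, g i ≤ Fintype.card κ • B := by
  rw [← sum_fiberwise s f g, ← card_univ, ← sum_const]
  refine sum_le_sum fun c _ => ?_
  rcases (s.filter (f · = c)).eq_empty_or_nonempty with he | ⟨i, hi⟩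
  · rw [he, sum_empty]
    exact hB
  · obtain ⟨hs, rfl⟩ := mem_filter.1 hi
    exact h i hs

section Entropy

variable {ι : Type*} [Fintype ι]

noncomputable def entropyNats (u : ι → ℝ) : ℝ := ∑ i, negMulLog (u i)

lemma abs_entropyNats_sub_le {u v : ι → ℝ} {ε : ℝ} (hu : ∀ i, u i ∈ Set.Icc (0 : ℝ) 1)
    (hv : ∀ i, v i ∈ Set.Icc (0 : ℝ) 1) (h : ∀ i, |u i - v i| ≤ ε) :
    |entropyNats u - entropyNats v| ≤ Fintype.card ι * (2 * √ε) :=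
  abs_sum_sub_sum_le fun i =>
    (abs_negMulLog_sub_le (hv i) (hu i)).trans (by gcongr; exact h i)

lemma shannonEntropy_mul_log_two (q : ι → ℝ) : shannonEntropy q * log 2 = entropyNats q := by
  have : log 2 ≠ 0 := (log_pos one_lt_two).ne'
  simp only [shannonEntropy, entropyNats, negMulLog, logb, neg_mul, sum_mul, ← sum_neg_distrib]
  refine sum_congr rfl fun b _ => ?_
  field_simp

end Entropy

section MutualInformation

variable {𝒳 𝒴 : Type*} [Fintype 𝒳] [Fintype 𝒴]

noncomputable def jointMutInfo (r : 𝒳 × 𝒴 → ℝ) : ℝ :=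
  entropyNats (fun a => ∑ b, r (a, b)) + entropyNats (fun b => ∑ a, r (a, b)) - entropyNats r

noncomputable def jointMutInfoModulus (X Y : ℕ) (ε : ℝ) : ℝ :=
  2 * (X * √(Y * ε) + Y * √(X * ε) + X * Y * √ε)

lemma marginal_fst_mem_stdSimplex {r : 𝒳 × 𝒴 → ℝ} (hr : r ∈ stdSimplex ℝ (𝒳 × 𝒴)) :
    (fun a => ∑ b, r (a, b)) ∈ stdSimplex ℝ 𝒳 :=
  ⟨fun _ => sum_nonneg fun _ _ => hr.1 _, by rw [← Fintype.sum_prod_type']; exact hr.2⟩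

lemma marginal_snd_mem_stdSimplex {r : 𝒳 × 𝒴 → ℝ} (hr : r ∈ stdSimplex ℝ (𝒳 × 𝒴)) :
    (fun b => ∑ a, r (a, b)) ∈ stdSimplex ℝ 𝒴 :=
  ⟨fun _ => sum_nonneg fun _ _ => hr.1 _, by rw [← Fintype.sum_prod_type_right']; exact hr.2⟩

lemma abs_jointMutInfo_sub_le {r s : 𝒳 × 𝒴 → ℝ} {ε : ℝ} (hr : r ∈ stdSimplex ℝ (𝒳 × 𝒴))
    (hs : s ∈ stdSimplex ℝ (𝒳 × 𝒴)) (h : ∀ ab, |r ab - s ab| ≤ ε) :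
    |jointMutInfo r - jointMutInfo s|
      ≤ jointMutInfoModulus (Fintype.card 𝒳) (Fintype.card 𝒴) ε := by
  have hX := abs_le.1 <| abs_entropyNats_sub_le
    (mem_Icc_of_mem_stdSimplex (marginal_fst_mem_stdSimplex hr))
    (mem_Icc_of_mem_stdSimplex (marginal_fst_mem_stdSimplex hs))
    fun a => abs_sum_sub_sum_le fun b => h (a, b)
  have hY := abs_le.1 <| abs_entropyNats_sub_le
    (mem_Icc_of_mem_stdSimplex (marginal_snd_mem_stdSimplex hr))
    (mem_Icc_of_mem_stdSimplex (marginal_snd_mem_stdSimplex hs))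
    fun b => abs_sum_sub_sum_le fun a => h (a, b)
  have hXY := abs_le.1 <| abs_entropyNats_sub_le
    (mem_Icc_of_mem_stdSimplex hr) (mem_Icc_of_mem_stdSimplex hs) h
  rw [Fintype.card_prod, Nat.cast_mul] at hXY
  rw [jointMutInfo, jointMutInfo, jointMutInfoModulus, abs_le]
  constructor <;> linarith

lemma joint_mem_stdSimplex {p : 𝒳 → ℝ} {W : 𝒳 → 𝒴 → ℝ} (hp : p ∈ stdSimplex ℝ 𝒳)
    (hW : ∀ a, W a ∈ stdSimplex ℝ 𝒴) :
    (fun ab : 𝒳 × 𝒴 => p ab.1 * W ab.1 ab.2) ∈ stdSimplex ℝ (𝒳 × 𝒴) := by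
  refine ⟨fun ab => mul_nonneg (hp.1 _) ((hW _).1 _), ?_⟩
  simp only [Fintype.sum_prod_type, ← mul_sum, (hW _).2, mul_one, hp.2]

lemma mutInfo_mul_log_two (p : 𝒳 → ℝ) {W : 𝒳 → 𝒴 → ℝ} (hW : ∀ a, ∑ b, W a b = 1) :
    mutInfo p W * log 2 = jointMutInfo (fun ab => p ab.1 * W ab.1 ab.2) := by
  have hfst : (fun a => ∑ b, p a * W a b) = p := funext fun a => by rw [← mul_sum, hW, mul_one]
  have hjoint : entropyNats (fun ab : 𝒳 × 𝒴 => p ab.1 * W ab.1 ab.2)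
      = entropyNats p + ∑ a, ∑ b, p a * negMulLog (W a b) := by
    simp only [entropyNats, Fintype.sum_prod_type, negMulLog_mul, sum_add_distrib, ← sum_mul, hW,
      one_mul]
  have hcond : condEntropyChan W p * log 2 = ∑ a, ∑ b, p a * negMulLog (W a b) := by
    have : log 2 ≠ 0 := (log_pos one_lt_two).ne'
    simp only [condEntropyChan, negMulLog, logb, neg_mul, sum_mul, ← sum_neg_distrib]
    refine sum_congr rfl fun a _ => sum_congr rfl fun b _ => ?_
    field_simp
  rw [mutInfo, sub_mul, shannonEntropy_mul_log_two, hcond, jointMutInfo, hjoint, hfst]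
  unfold outDist
  ring

end MutualInformation

section Types

variable {α β : Type*} [DecidableEq α] [DecidableEq β] {n : ℕ}

lemma cnt_le (a : α) (z : Fin n → α) : cnt a z ≤ n :=
  (card_filter_le _ _).trans_eq (card_fin n)

lemma sum_cnt [Fintype α] (z : Fin n → α) : ∑ a, cnt a z = n := by
  simpa [cnt] using (card_eq_sum_card_fiberwise fun i (_ : i ∈ univ) => mem_univ (z i)).symm

lemma cnt_ne_zero (z : Fin n → α) (i : Fin n) : cnt (z i) z ≠ 0 :=
  card_ne_zero.2 ⟨i, by simp⟩

lemma sum_cnt_prod_left [Fintype β] (x : Fin n → α) (y : Fin n → β) (a : α) :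
    ∑ b, cnt (a, b) (Function.prod x y) = cnt a x := by
  rw [cnt, card_eq_sum_card_fiberwise (f := y) (t := univ) (by simp)]
  refine sum_congr rfl fun b _ => congrArg card ?_
  ext i
  simp [Function.prod, Prod.ext_iff]

lemma sum_cnt_prod_right [Fintype α] (x : Fin n → α) (y : Fin n → β) (b : β) :
    ∑ a, cnt (a, b) (Function.prod x y) = cnt b y := by
  rw [cnt, card_eq_sum_card_fiberwise (f := x) (t := univ) (by simp)]
  refine sum_congr rfl fun a _ => congrArg card ?_
  ext i
  simp [Function.prod, Prod.ext_iff, and_comm]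

lemma cnt2_eq_cnt_prod (a : α) (b : β) (x : Fin n → α) (y : Fin n → β) :
    cnt2 a b x y = cnt (a, b) (Function.prod x y) := by
  simp [cnt2, cnt, Function.prod, Prod.ext_iff]

lemma prod_comp_eq_prod_pow_cnt [Fintype α] {M : Type*} [CommMonoid M] (z : Fin n → α)
    (f : α → M) :
    ∏ i, f (z i) = ∏ a, f a ^ cnt a z := by
  rw [← prod_fiberwise' univ z f]
  simp [cnt, prod_const]

noncomputable def empDist (z : Fin n → α) : α → ℝ := fun a => cnt a z / n

lemma empDist_mem_stdSimplex [Fintype α] (hn : 0 < n) (z : Fin n → α) :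
    empDist z ∈ stdSimplex ℝ α := by
  refine ⟨fun a => by unfold empDist; positivity, ?_⟩
  simp only [empDist, ← sum_div, ← Nat.cast_sum, sum_cnt]
  exact div_self (by positivity)

lemma sum_empDist_prod_left [Fintype β] (x : Fin n → α) (y : Fin n → β) (a : α) :
    ∑ b, empDist (Function.prod x y) (a, b) = empDist x a := by
  simp only [empDist, ← sum_div, ← Nat.cast_sum, sum_cnt_prod_left]

lemma sum_empDist_prod_right [Fintype α] (x : Fin n → α) (y : Fin n → β) (b : β) :
    ∑ a, empDist (Function.prod x y) (a, b) = empDist y b := by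
  simp only [empDist, ← sum_div, ← Nat.cast_sum, sum_cnt_prod_right]

lemma prod_empDist_pow_cnt [Fintype α] (hn : 0 < n) (z : Fin n → α) :
    ∏ a, empDist z a ^ cnt a z = exp (-(n * entropyNats (empDist z))) := by
  rw [entropyNats, mul_sum, ← sum_neg_distrib, exp_sum]
  exact prod_congr rfl fun a _ => div_pow_self_eq_exp _ (Nat.cast_pos.2 hn)

-- Gibbs' inequality, in product form.
lemma prod_comp_le_exp_neg_entropyNats [Fintype α] (hn : 0 < n) {q : α → ℝ}
    (hq₀ : ∀ a, 0 ≤ q a) (hq₁ : ∑ a, q a ≤ 1) (z : Fin n → α) :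
    ∏ i, q (z i) ≤ exp (-(n * entropyNats (empDist z))) := by
  have hn' : (0 : ℝ) < n := Nat.cast_pos.2 hn
  calc ∏ i, q (z i) = ∏ a, q a ^ cnt a z := prod_comp_eq_prod_pow_cnt z q
    _ ≤ ∏ a, (empDist z a ^ cnt a z * exp (n * q a - cnt a z)) :=
        prod_le_prod (fun a _ => pow_nonneg (hq₀ a) _) fun a _ =>
          pow_le_div_pow_mul_exp (hq₀ a) hn' _
    _ = exp (-(n * entropyNats (empDist z))) * exp (n * (∑ a, q a - 1)) := by
        rw [prod_mul_distrib, prod_empDist_pow_cnt hn, ← exp_sum, sum_sub_distrib, ← mul_sum,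
          ← Nat.cast_sum, sum_cnt, mul_sub, mul_one]
    _ ≤ exp (-(n * entropyNats (empDist z))) :=
        mul_le_of_le_one_right (exp_pos _).le
          (exp_le_one_iff.2 (mul_nonpos_of_nonneg_of_nonpos hn'.le (by linarith)))

-- Valued in `Fin (n + 1)`, so that visibly there are at most `(n + 1) ^ |α|` types.
def typeCounts (z : Fin n → α) : α → Fin (n + 1) :=
  fun a => ⟨cnt a z, Nat.lt_succ_of_le (cnt_le a z)⟩

lemma cnt_eq_of_typeCounts_eq {z z' : Fin n → α} (h : typeCounts z = typeCounts z') (a : α) :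
    cnt a z = cnt a z' :=
  congrArg Fin.val (congrFun h a)

lemma empDist_eq_of_typeCounts_eq {z z' : Fin n → α} (h : typeCounts z = typeCounts z') :
    empDist z = empDist z' :=
  funext fun a => by simp only [empDist, cnt_eq_of_typeCounts_eq h a]

lemma card_typeClass_mul_prod_pow_le_one [Fintype α] [Fintype β] (x : Fin n → α)
    (y₀ : Fin n → β) {V : α × β → ℝ} (hV₀ : ∀ ab, 0 ≤ V ab) (hV₁ : ∀ i, ∑ b, V (x i, b) ≤ 1) :
    #{y | typeCounts (Function.prod x y) = typeCounts (Function.prod x y₀)}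
        * ∏ ab, V ab ^ cnt ab (Function.prod x y₀) ≤ 1 := by
  calc _ = ∑ y with typeCounts (Function.prod x y) = typeCounts (Function.prod x y₀),
        ∏ i, V (Function.prod x y i) := by
        rw [card_eq_sum_ones, Nat.cast_sum, sum_mul]
        refine sum_congr rfl fun y hy => ?_
        rw [Nat.cast_one, one_mul, prod_comp_eq_prod_pow_cnt]
        simp only [cnt_eq_of_typeCounts_eq (mem_filter.1 hy).2]
    _ ≤ ∑ y, ∏ i, V (Function.prod x y i) :=
        sum_le_sum_of_subset_of_nonneg (filter_subset _ _) fun _ _ _ =>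
          prod_nonneg fun _ _ => hV₀ _
    _ = ∏ i, ∑ b, V (x i, b) := (Fintype.prod_sum fun i b => V (x i, b)).symm
    _ ≤ 1 := prod_le_one (fun _ _ => sum_nonneg fun _ _ => hV₀ _) fun i _ => hV₁ i

lemma card_typeClass_le [Fintype α] [Fintype β] (hn : 0 < n) (x : Fin n → α) (y₀ : Fin n → β) :
    (#{y | typeCounts (Function.prod x y) = typeCounts (Function.prod x y₀)} : ℝ)
      ≤ exp (n * (entropyNats (empDist (Function.prod x y₀)) - entropyNats (empDist x))) := by
  set ν := empDist (Function.prod x y₀)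
  set μ := empDist x
  have hμ : ∀ i, μ (x i) ≠ 0 := fun i =>
    div_ne_zero (Nat.cast_ne_zero.2 (cnt_ne_zero x i)) (Nat.cast_ne_zero.2 hn.ne')
  have hprod : ∏ ab, (ν ab / μ ab.1) ^ cnt ab (Function.prod x y₀)
      = exp (-(n * entropyNats ν)) / exp (-(n * entropyNats μ)) := by
    rw [← prod_empDist_pow_cnt hn, ← prod_empDist_pow_cnt hn]
    simp only [div_pow, prod_div_distrib]
    congr 1
    rw [Fintype.prod_prod_type]
    simp only [prod_pow_eq_pow_sum, sum_cnt_prod_left]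
    rfl
  have h := card_typeClass_mul_prod_pow_le_one x y₀ (V := fun ab => ν ab / μ ab.1)
    (fun ab => div_nonneg ((empDist_mem_stdSimplex hn _).1 ab) ((empDist_mem_stdSimplex hn _).1 _))
    fun i => by
      change ∑ b, ν (x i, b) / μ (x i) ≤ 1
      rw [← sum_div, sum_empDist_prod_left, div_self (hμ i)]
  rw [hprod, mul_div_assoc', div_le_one (exp_pos _), ← le_div_iff₀ (exp_pos _), ← exp_sub] at h
  exact h.trans_eq (congrArg exp (by ring))

lemma sum_typeClass_prod_le [Fintype α] [Fintype β] (hn : 0 < n) {q : β → ℝ}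
    (hq₀ : ∀ b, 0 ≤ q b) (hq₁ : ∑ b, q b ≤ 1) (x : Fin n → α) (y₀ : Fin n → β) (s : Finset (Fin n → β)) :
    ∑ y ∈ s with typeCounts (Function.prod x y) = typeCounts (Function.prod x y₀), ∏ i, q (y i)
      ≤ exp (-(n * jointMutInfo (empDist (Function.prod x y₀)))) := by
  have hterm : ∀ y, typeCounts (Function.prod x y) = typeCounts (Function.prod x y₀) →
      ∏ i, q (y i) ≤ exp (-(n * entropyNats (empDist y₀))) := by
    intro y hxy
    have hy : empDist y = empDist y₀ := funext fun b => by
      rw [← sum_empDist_prod_right x y, ← sum_empDist_prod_right x y₀,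
        empDist_eq_of_typeCounts_eq hxy]
    simpa only [hy] using prod_comp_le_exp_neg_entropyNats hn hq₀ hq₁ y
  calc _ ≤ ∑ _y ∈ s with typeCounts (Function.prod x _y) = typeCounts (Function.prod x y₀),
        exp (-(n * entropyNats (empDist y₀))) :=
        sum_le_sum fun y hy => hterm y (mem_filter.1 hy).2
    _ ≤ #{y | typeCounts (Function.prod x y) = typeCounts (Function.prod x y₀)}
        * exp (-(n * entropyNats (empDist y₀))) := by
        rw [sum_const, nsmul_eq_mul]
        exact mul_le_mul_of_nonneg_right
          (Nat.cast_le.2 (card_le_card (filter_subset_filter _ (subset_univ s)))) (exp_pos _).le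
    _ ≤ exp (n * (entropyNats (empDist (Function.prod x y₀)) - entropyNats (empDist x)))
        * exp (-(n * entropyNats (empDist y₀))) := by
        gcongr
        exact card_typeClass_le hn x y₀
    _ = exp (-(n * jointMutInfo (empDist (Function.prod x y₀)))) := by
        rw [← exp_add, jointMutInfo, funext (sum_empDist_prod_left x y₀),
          funext (sum_empDist_prod_right x y₀)]
        ring_nf

end Types

section Typicality

variable {𝒳 𝒴 : Type*} [Fintype 𝒳] [DecidableEq 𝒳] [Fintype 𝒴] [DecidableEq 𝒴] {n : ℕ}

lemma abs_empDist_sub_le_of_mem_condTypSet {p : 𝒳 → ℝ} {W : 𝒳 → 𝒴 → ℝ} {δ : ℝ}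
    {x : Fin n → 𝒳} {y : Fin n → 𝒴} (hW : ∀ a, W a ∈ stdSimplex ℝ 𝒴) (hx : x ∈ typSet n p δ)
    (hy : y ∈ condTypSet n W δ x) (ab : 𝒳 × 𝒴) :
    |empDist (Function.prod x y) ab - p ab.1 * W ab.1 ab.2| ≤ 2 * δ := by
  obtain ⟨a, b⟩ := ab
  have hxa := ((mem_filter.1 hx).2 a).1
  have hyab := ((mem_filter.1 hy).2 a b).1
  have hW₁ := mem_Icc_of_mem_stdSimplex (hW a) b
  have hWx : |W a b * ((cnt a x : ℝ) / n) - p a * W a b| ≤ δ := by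
    rw [mul_comm (p a), ← mul_sub, abs_mul, abs_of_nonneg hW₁.1]
    exact (mul_le_of_le_one_left (abs_nonneg _) hW₁.2).trans hxa.le
  rw [empDist, ← cnt2_eq_cnt_prod]
  linarith [abs_sub_le ((cnt2 a b x y : ℝ) / n) (W a b * ((cnt a x : ℝ) / n)) (p a * W a b)]

lemma mutInfo_mul_log_two_sub_le_jointMutInfo (hn : 0 < n) {p : 𝒳 → ℝ} {W : 𝒳 → 𝒴 → ℝ}
    {δ : ℝ} {x : Fin n → 𝒳} {y : Fin n → 𝒴} (hp : p ∈ stdSimplex ℝ 𝒳)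
    (hW : ∀ a, W a ∈ stdSimplex ℝ 𝒴) (hx : x ∈ typSet n p δ) (hy : y ∈ condTypSet n W δ x) :
    mutInfo p W * log 2 - jointMutInfoModulus (Fintype.card 𝒳) (Fintype.card 𝒴) (2 * δ)
      ≤ jointMutInfo (empDist (Function.prod x y)) := by
  have h := abs_jointMutInfo_sub_le (empDist_mem_stdSimplex hn _) (joint_mem_stdSimplex hp hW)
    (abs_empDist_sub_le_of_mem_condTypSet hW hx hy)
  rw [mutInfo_mul_log_two p fun a => (hW a).2]
  linarith [(abs_le.1 h).1]

end Typicality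

/-- Packing lemma (cross-typicality bound): for `x̄ ∈ 𝒯ⁿ_{p̄,δ}`,
`(pW)ⁿ(𝒯ⁿ_{W̄,δ}(x̄)) ≤ (n+1)^{|𝒳||𝒴|} 2^{−n(I(p̄;W̄) − f₃(δ))}` for some
`f₃(δ) > 0` with `f₃(δ) → 0` as `δ → 0`. -/
theorem packing_lemma {𝒳 𝒴 : Type*} [Fintype 𝒳] [DecidableEq 𝒳]
    [Fintype 𝒴] [DecidableEq 𝒴] :
    ∃ f₃ : ℝ → ℝ, (∀ δ > 0, 0 < f₃ δ) ∧
      Filter.Tendsto f₃ (nhdsWithin 0 (Set.Ioi 0)) (nhds 0) ∧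
      ∀ (n : ℕ), 0 < n →
        ∀ p pbar : 𝒳 → ℝ, (∀ a, 0 ≤ p a) → (∑ a, p a = 1) →
          (∀ a, 0 ≤ pbar a) → (∑ a, pbar a = 1) →
        ∀ W Wbar : 𝒳 → 𝒴 → ℝ,
          (∀ a, (∀ b, 0 ≤ W a b) ∧ ∑ b, W a b = 1) →
          (∀ a, (∀ b, 0 ≤ Wbar a b) ∧ ∑ b, Wbar a b = 1) →
        ∀ δ > 0, ∀ xbar ∈ typSet n pbar δ,
          (∑ y ∈ condTypSet n Wbar δ xbar, ∏ i, outDist p W (y i))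
            ≤ ((n + 1 : ℝ) ^ (Fintype.card 𝒳 * Fintype.card 𝒴)) *
                2 ^ (-((n : ℝ) * (mutInfo pbar Wbar - f₃ δ))) := by
  set κ := jointMutInfoModulus (Fintype.card 𝒳) (Fintype.card 𝒴)
  have hlog2 : 0 < log 2 := log_pos one_lt_two
  -- The summand `δ` keeps `f₃` positive when `𝒳` or `𝒴` is empty.
  refine ⟨fun δ => κ (2 * δ) / log 2 + δ, fun δ hδ => ?_, ?_, ?_⟩
  · have : 0 ≤ κ (2 * δ) := by unfold κ jointMutInfoModulus; positivity
    positivity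
  · have hcont : Continuous fun δ => κ (2 * δ) / log 2 + δ := by
      unfold κ jointMutInfoModulus; fun_prop
    simpa [κ, jointMutInfoModulus] using tendsto_nhdsWithin_of_tendsto_nhds (hcont.tendsto 0)
  intro n hn p pbar hp₀ hp₁ hpbar₀ hpbar₁ W Wbar hW hWbar δ hδ xbar hxbar
  have hq := marginal_snd_mem_stdSimplex (joint_mem_stdSimplex ⟨hp₀, hp₁⟩ hW)
  have hgap : ∀ y ∈ condTypSet n Wbar δ xbar,
      (mutInfo pbar Wbar - (κ (2 * δ) / log 2 + δ)) * log 2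
        ≤ jointMutInfo (empDist (Function.prod xbar y)) := fun y hy => by
    have := mutInfo_mul_log_two_sub_le_jointMutInfo hn ⟨hpbar₀, hpbar₁⟩ hWbar hxbar hy
    rw [sub_mul, add_mul, div_mul_cancel₀ _ hlog2.ne']
    linarith [mul_pos hδ hlog2]
  calc _ ≤ Fintype.card (𝒳 × 𝒴 → Fin (n + 1))
        • exp (-(n * ((mutInfo pbar Wbar - (κ (2 * δ) / log 2 + δ)) * log 2))) :=
        sum_le_card_nsmul_of_sum_fiber_le (exp_pos _).le fun y₀ hy₀ =>
          (sum_typeClass_prod_le hn hq.1 hq.2.le xbar y₀ _).trans <| exp_le_exp.2 <|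
            neg_le_neg <| mul_le_mul_of_nonneg_left (hgap y₀ hy₀) n.cast_nonneg
    _ = _ := by
        rw [nsmul_eq_mul, Fintype.card_fun, Fintype.card_fin, Fintype.card_prod,
          rpow_def_of_pos two_pos]
        push_cast
        ring_nf
end

section
/- Union of conditional typical sets lies in a row-convex typical set: For x'^n ∈ 𝒯ⁿ_{P,δ} and any s^n, the conditionally typical set 𝒯ⁿ_{W,δ}(x'^n, s^n) with respect to the joint channel is contained in 𝒯ⁿ_{Ŵ̂, |𝒮|δ}(x'^n) for some channel Ŵ̂ in the row convex closure Ŵ̂ of {W(·|·,s)}; consequently, the union over all s^n of the same type class is contained in a single typical set of a row-convex channel. -/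
open Finset
open scoped Classical

lemma count_partition {ι 𝒮 : Type*} [Fintype 𝒮] [DecidableEq 𝒮] (t : Finset ι)
    (p : ι → Prop) [DecidablePred p] (f : ι → 𝒮) :
    ∑ s, (t.filter fun i => p i ∧ f i = s).card = (t.filter p).card := by
  simp only [Finset.card_filter]
  rw [Finset.sum_comm]
  refine Finset.sum_congr rfl fun i _ => ?_
  by_cases h : p i
  · simp [h]
  · simp [h]

lemma cnt2_le_cnt {𝒳 𝒴 : Type*} [DecidableEq 𝒳] [DecidableEq 𝒴] {n : ℕ}
    (a : 𝒳) (b : 𝒴) (x : Fin n → 𝒳) (y : Fin n → 𝒴) : cnt2 a b x y ≤ cnt a x := by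
  apply Finset.card_le_card
  intro i hi
  simp only [Finset.mem_filter] at *
  exact ⟨hi.1, hi.2.1⟩

/-- Union of conditional typical sets lies in a row-convex typical set: for
`x' ∈ 𝒯ⁿ_{P,δ}` there is a stochastic map `p̂ ∈ 𝒫(𝒮|𝒳)` such that for every state
sequence `s` of the same joint type (with `x'`) as `s₀`, the jointly conditional
typical set `𝒯ⁿ_{W,δ}(x', s)` is contained in `𝒯ⁿ_{W_{p̂}, |𝒮|δ}(x')`, where
`W_{p̂}(y|x) = ∑_s p̂(s|x) W(y|x,s)` lies in the row convex closure. -/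
theorem union_cond_typical_subset_row_convex {𝒳 𝒮 𝒴 : Type*}
    [Fintype 𝒳] [DecidableEq 𝒳] [Fintype 𝒮] [DecidableEq 𝒮]
    [Fintype 𝒴] [DecidableEq 𝒴]
    (n : ℕ) (hn : 0 < n) (W : 𝒳 → 𝒮 → 𝒴 → ℝ)
    (hW : ∀ x s, (∀ y, 0 ≤ W x s y) ∧ ∑ y, W x s y = 1)
    (δ : ℝ) (hδ : 0 < δ) (P : 𝒳 → ℝ)
    (x' : Fin n → 𝒳) (hx' : x' ∈ typSet n P δ) (s₀ : Fin n → 𝒮) :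
    ∃ phat : 𝒳 → 𝒮 → ℝ, (∀ a, (∀ s, 0 ≤ phat a s) ∧ ∑ s, phat a s = 1) ∧
      ∀ s : Fin n → 𝒮, (∀ a b, cnt2 a b x' s = cnt2 a b x' s₀) →
        condTypSet n (fun (q : 𝒳 × 𝒮) y => W q.1 q.2 y) δ (fun i => (x' i, s i))
          ⊆ condTypSet n (fun a y => ∑ t, phat a t * W a t y)
              ((Fintype.card 𝒮 : ℝ) * δ) x' := by

  haveI hS : Nonempty 𝒮 := ⟨s₀ ⟨0, hn⟩⟩
  have hcardS : (0:ℝ) < Fintype.card 𝒮 := by exact_mod_cast Fintype.card_pos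
  set phat : 𝒳 → 𝒮 → ℝ := fun a t =>
    if cnt a x' = 0 then ((Fintype.card 𝒮 : ℝ))⁻¹ else (cnt2 a t x' s₀ : ℝ) / (cnt a x' : ℝ)
    with hphat
  have hnn : ∀ a t, 0 ≤ phat a t := by
    intro a t
    by_cases h : cnt a x' = 0
    · simp only [hphat, if_pos h]; positivity
    · simp only [hphat, if_neg h]; positivity
  have hsum_gen : ∀ (a : 𝒳) (s' : Fin n → 𝒮), ∑ t, cnt2 a t x' s' = cnt a x' := by
    intro a s'
    simpa [cnt2, cnt] using count_partition Finset.univ (fun i => x' i = a) s'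
  refine ⟨phat, ?_, ?_⟩
  · intro a
    refine ⟨hnn a, ?_⟩
    by_cases h : cnt a x' = 0
    · simp only [hphat, if_pos h, Finset.sum_const, Finset.card_univ, nsmul_eq_mul]
      exact mul_inv_cancel₀ hcardS.ne'
    · have hne : ((cnt a x' : ℝ)) ≠ 0 := Nat.cast_ne_zero.mpr h
      simp only [hphat, if_neg h]
      rw [← Finset.sum_div]
      rw [show (∑ t, (cnt2 a t x' s₀ : ℝ)) = (cnt a x' : ℝ) by exact_mod_cast hsum_gen a s₀]
      exact div_self hne
  · intro s hs y hy
    simp only [condTypSet, Finset.mem_filter, Finset.mem_univ, true_and] at hy ⊢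
    intro a b
    have hcntpair : ∀ t : 𝒮, cnt (a, t) (fun i => (x' i, s i)) = cnt2 a t x' s := by
      intro t
      apply congrArg Finset.card
      ext i
      simp [Prod.ext_iff]
    have hkey : ∀ t, phat a t * (cnt a x' : ℝ) = (cnt2 a t x' s : ℝ) := by
      intro t
      by_cases h : cnt a x' = 0
      · have h2 : cnt2 a t x' s = 0 := Nat.le_zero.mp (h ▸ cnt2_le_cnt a t x' s)
        simp [hphat, h, h2]
      · have hne : ((cnt a x' : ℝ)) ≠ 0 := Nat.cast_ne_zero.mpr h
        simp only [hphat, if_neg h]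
        rw [div_mul_cancel₀ _ hne]
        exact_mod_cast (hs a t).symm
    have hpart_y : ∀ b' : 𝒴,
        ∑ t, cnt2 (a, t) b' (fun i => (x' i, s i)) y = cnt2 a b' x' y := by
      intro b'
      have h1 : ∀ t : 𝒮, cnt2 (a, t) b' (fun i => (x' i, s i)) y
          = (Finset.univ.filter fun i => (x' i = a ∧ y i = b') ∧ s i = t).card := by
        intro t
        apply congrArg Finset.card
        ext i
        simp only [Finset.mem_filter, Finset.mem_univ, true_and, cnt2, Prod.ext_iff]
        tauto
      rw [Finset.sum_congr rfl (fun t _ => h1 t),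
        count_partition Finset.univ (fun i => x' i = a ∧ y i = b') s]
      rfl
    constructor
    · have hdiff : (cnt2 a b x' y : ℝ) / n
          - (∑ t, phat a t * W a t b) * ((cnt a x' : ℝ) / n)
          = ∑ t, ((cnt2 (a, t) b (fun i => (x' i, s i)) y : ℝ) / n
              - W a t b * ((cnt2 a t x' s : ℝ) / n)) := by
        rw [Finset.sum_sub_distrib]
        congr 1
        · rw [← Finset.sum_div]
          congr 1
          exact_mod_cast (hpart_y b).symm
        · rw [Finset.sum_mul]
          refine Finset.sum_congr rfl fun t _ => ?_
          rw [← hkey t]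
          ring
      rw [hdiff]
      calc |∑ t, ((cnt2 (a, t) b (fun i => (x' i, s i)) y : ℝ) / n
              - W a t b * ((cnt2 a t x' s : ℝ) / n))|
          ≤ ∑ t, |(cnt2 (a, t) b (fun i => (x' i, s i)) y : ℝ) / n
              - W a t b * ((cnt2 a t x' s : ℝ) / n)| := Finset.abs_sum_le_sum_abs _ _
        _ < ∑ _t : 𝒮, δ := by
            refine Finset.sum_lt_sum_of_nonempty Finset.univ_nonempty fun t _ => ?_
            have := (hy (a, t) b).1
            rwa [hcntpair t] at this
        _ = (Fintype.card 𝒮 : ℝ) * δ := by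
            simp [Finset.sum_const, Finset.card_univ, nsmul_eq_mul]
    · intro h0
      have hterm : ∀ t ∈ Finset.univ, phat a t * W a t b = 0 :=
        (Finset.sum_eq_zero_iff_of_nonneg
          (fun t _ => mul_nonneg (hnn a t) ((hW a t).1 b))).mp h0
      rw [← hpart_y b]
      refine Finset.sum_eq_zero fun t _ => ?_
      rcases mul_eq_zero.mp (hterm t (Finset.mem_univ t)) with hp | hw
      · have h1 : (cnt2 a t x' s : ℝ) = 0 := by rw [← hkey t, hp, zero_mul]
        have h2 : cnt2 a t x' s = 0 := by exact_mod_cast h1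
        have h3 := cnt2_le_cnt (a, t) b (fun i => (x' i, s i)) y
        rw [hcntpair t, h2] at h3
        omega
      · exact (hy (a, t) b).2 hw
end
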